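/- Suppose there are at least two schools, at least one first-preference-first school, k > 1, and all schools have a common priority order. Then the constrained serial dictatorship mechanism SD^k is more fair by stability than the constrained First-Preference-First mechanism FPF^k: (i) for every problem (P,≻,q) with common priority, if FPF^k(P,≻,q) is stable at (P,≻,q) then SD^k(P,≻,q) is stable at (P,≻,q); and (ii) there exists such a problem at which SD^k is stable but FPF^k is not. -/

import Mathlib

/-!
School choice framework following Bonkoungou–Nesterov,
"Reforms meet fairness concerns in school and college admissions".

Students `I` and schools `S` are finite types with `|I| > |S|`.
A strict preference relation of a student over `S ∪ {∅}` is represented by a list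
of `Option S` containing every element exactly once (earlier = more preferred);
`none` is the outside option.  A strict priority order of a school is a list of
`I` containing every student exactly once (earlier = higher priority).
-/

namespace SchoolChoice

variable {I S : Type*} [Fintype I] [DecidableEq I] [Fintype S] [DecidableEq S]

/-- `p` is a strict preference relation on `S ∪ {∅}`: a ranking list containing every
element of `Option S` exactly once. -/
def ValidPref (p : List (Option S)) : Prop := p.Nodup ∧ ∀ x : Option S, x ∈ p

/-- `pr` is a strict priority order: a ranking list containing every student exactly once. -/
def ValidPrio (pr : List I) : Prop := pr.Nodup ∧ ∀ i : I, i ∈ pr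

/-- `a` is strictly preferred to `b` under the preference relation `p`. -/
def prefLt (p : List (Option S)) (a b : Option S) : Prop := p.idxOf a < p.idxOf b

/-- `i` has strictly higher priority than `j` under the priority order `pr`. -/
def prioLt (pr : List I) (i j : I) : Prop := pr.idxOf i < pr.idxOf j

instance (p : List (Option S)) (a b : Option S) : Decidable (prefLt p a b) :=
  inferInstanceAs (Decidable (_ < _))

instance (pr : List I) (i j : I) : Decidable (prioLt pr i j) :=
  inferInstanceAs (Decidable (_ < _))

/-- The acceptable schools of `p` (those preferred to the outside option), in preference
order. -/
def acceptables (p : List (Option S)) : List S := (p.takeWhile Option.isSome).filterMap id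

/-- The truncation of `p` after its `k`-th acceptable school: the preference relation
listing, in the same order, only the `min k _` most-preferred acceptable schools of `p`,
all other schools being unacceptable (kept below `none` in their original order). -/
def truncate (p : List (Option S)) (k : ℕ) : List (Option S) :=
  ((acceptables p).take k).map some ++
    none :: p.filter (fun x => decide (x ≠ none ∧ x ∉ ((acceptables p).take k).map some))

/-- `μ` is a matching: it respects the capacities `q`. -/
def IsMatching (q : S → ℕ) (μ : I → Option S) : Prop :=
  ∀ s : S, (Finset.univ.filter (fun i => μ i = some s)).card ≤ q s

/-- The pair `(i, s)` blocks `μ` under the problem `(P, prio, q)`. -/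
def Blocks (P : I → List (Option S)) (prio : S → List I) (q : S → ℕ)
    (μ : I → Option S) (i : I) (s : S) : Prop :=
  prefLt (P i) (some s) (μ i) ∧
    ((Finset.univ.filter (fun j => μ j = some s)).card < q s ∨
      ∃ j : I, μ j = some s ∧ prioLt (prio s) i j)

/-- `i` is a blocking student for `μ` under `(P, prio, q)`. -/
def BlockingStudent (P : I → List (Option S)) (prio : S → List I) (q : S → ℕ)
    (μ : I → Option S) (i : I) : Prop :=
  ∃ s : S, Blocks P prio q μ i s

/-- `μ` is individually rational under `P`. -/
def IndividuallyRational (P : I → List (Option S)) (μ : I → Option S) : Prop :=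
  ∀ i : I, ¬ prefLt (P i) none (μ i)

/-- `μ` is stable at `(P, prio, q)`. -/
def IsStable (P : I → List (Option S)) (prio : S → List I) (q : S → ℕ)
    (μ : I → Option S) : Prop :=
  IndividuallyRational P μ ∧ ∀ i : I, ¬ BlockingStudent P prio q μ i

/-- The number of blocking students for `μ` under `(P, prio, q)`. -/
noncomputable def numBlocking (P : I → List (Option S)) (prio : S → List I) (q : S → ℕ)
    (μ : I → Option S) : ℕ :=
  {i : I | BlockingStudent P prio q μ i}.ncard

/-! ### The Gale–Shapley student-proposing deferred acceptance mechanism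

The state `σ : I → ℕ` records, for each student, how many of her acceptable schools
have already rejected her; she currently applies to the `σ i`-th school on her list
(if any).  At each round every school tentatively keeps the `q s` highest-priority
students among its current applicants and rejects the rest, who move on. -/

/-- The school student `i` currently applies to. -/
def daTarget (P : I → List (Option S)) (σ : I → ℕ) (i : I) : Option S :=
  (acceptables (P i))[σ i]?

/-- The students tentatively held by school `s`: the `q s` highest-priority current
applicants. -/
def daHeld (P : I → List (Option S)) (prio : S → List I) (q : S → ℕ)
    (σ : I → ℕ) (s : S) : List I :=
  ((prio s).filter (fun i => decide (daTarget P σ i = some s))).take (q s)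

/-- One round of deferred acceptance: every rejected student moves to her next choice. -/
def daStep (P : I → List (Option S)) (prio : S → List I) (q : S → ℕ)
    (σ : I → ℕ) : I → ℕ := fun i =>
  match daTarget P σ i with
  | none => σ i
  | some s => if i ∈ daHeld P prio q σ s then σ i else σ i + 1

/-- The Gale–Shapley (student-proposing deferred acceptance) mechanism.  Iterating the
round map `|I| * |S| + 1` times is guaranteed to reach the terminal state. -/
def GS (P : I → List (Option S)) (prio : S → List I) (q : S → ℕ) : I → Option S :=
  fun i =>
    let σ := (daStep P prio q)^[Fintype.card I * Fintype.card S + 1] (fun _ => 0)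
    match daTarget P σ i with
    | none => none
    | some s => if i ∈ daHeld P prio q σ s then some s else none

/-- The constrained Gale–Shapley mechanism `GS^k`. -/
def GSk (k : ℕ) (P : I → List (Option S)) (prio : S → List I) (q : S → ℕ) : I → Option S :=
  GS (fun i => truncate (P i) k) prio q

/-! ### The Boston (immediate acceptance) mechanism -/

/-- Round `t` of the Boston mechanism: each not-yet-accepted student applies to her
`t`-th ranked acceptable school (0-indexed), and each school permanently accepts, up to
its remaining capacity, its highest-priority new applicants. -/
def bostonRound (P : I → List (Option S)) (prio : S → List I) (q : S → ℕ)
    (μ : I → Option S) (t : ℕ) : I → Option S := fun i =>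
  match μ i with
  | some s => some s
  | none =>
    match (acceptables (P i))[t]? with
    | none => none
    | some s =>
      if i ∈ ((prio s).filter
            (fun j => decide (μ j = none ∧ (acceptables (P j))[t]? = some s))).take
          (q s - (Finset.univ.filter (fun j => μ j = some s)).card)
      then some s else none

/-- The Boston (immediate acceptance) mechanism. -/
def Boston (P : I → List (Option S)) (prio : S → List I) (q : S → ℕ) : I → Option S :=
  (List.range (Fintype.card S)).foldl (bostonRound P prio q) (fun _ => none)

/-- The constrained Boston mechanism `β^k`. -/
def Bostonk (k : ℕ) (P : I → List (Option S)) (prio : S → List I) (q : S → ℕ) :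
    I → Option S :=
  Boston (fun i => truncate (P i) k) prio q

/-! ### The first-preference-first mechanism -/

/-- The adjusted priority profile: each first-preference-first school (member of `fpf`)
ranks students first by the rank they assign to it under `P` (counting the ranking of the
outside option as well), ties broken by the original priority; equal-preference schools
keep their original priority. -/
def fpfPrio (fpf : Finset S) (P : I → List (Option S)) (prio : S → List I) : S → List I :=
  fun s =>
    if s ∈ fpf then
      (List.range (Fintype.card S + 1)).flatMap
        (fun r => (prio s).filter (fun i => decide ((P i).idxOf (some s) = r)))
    else prio s

/-- The first-preference-first mechanism with set `fpf` of first-preference-first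
schools: Gale–Shapley run on the adjusted priorities. -/
def FPF (fpf : Finset S) (P : I → List (Option S)) (prio : S → List I) (q : S → ℕ) :
    I → Option S :=
  GS P (fpfPrio fpf P prio) q

/-- The constrained first-preference-first mechanism `FPF^k`. -/
def FPFk (fpf : Finset S) (k : ℕ) (P : I → List (Option S)) (prio : S → List I)
    (q : S → ℕ) : I → Option S :=
  FPF fpf (fun i => truncate (P i) k) prio q

/-! ### Manipulation and equilibrium notions -/

/-- Student `i` is a manipulating student of the mechanism `φ` (with priorities and
capacities fixed) at the true profile `P`. -/
def ManipulatingStudent (φ : (I → List (Option S)) → I → Option S)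
    (P : I → List (Option S)) (i : I) : Prop :=
  ∃ Q : List (Option S), ValidPref Q ∧
    prefLt (P i) (φ (Function.update P i Q) i) (φ P i)

/-- The mechanism `φ` is not manipulable at `P`. -/
def NotManipulable (φ : (I → List (Option S)) → I → Option S)
    (P : I → List (Option S)) : Prop :=
  ∀ i : I, ¬ ManipulatingStudent φ P i

/-- `P'` is a Nash equilibrium of the game `(φ, P)` in which the sophisticated students
are the members of `M` (who may misreport, and best respond) and all other (sincere)
students report truthfully. -/
def NashEq (φ : (I → List (Option S)) → I → Option S) (P : I → List (Option S))
    (M : Finset I) (P' : I → List (Option S)) : Prop :=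
  (∀ i, ValidPref (P' i)) ∧ (∀ i ∉ M, P' i = P i) ∧
    ∀ i ∈ M, ∀ Q : List (Option S), ValidPref Q →
      ¬ prefLt (P i) (φ (Function.update P' i Q) i) (φ P' i)

/-! ### Semi-sophisticated students -/

/-- Student `i` is guaranteed her first choice `s`: `s` is her most-preferred acceptable
school and `i` is among the `q s` highest-priority students at `s`. -/
def GuaranteedFirstChoice (P : I → List (Option S)) (prio : S → List I) (q : S → ℕ)
    (i : I) (s : S) : Prop :=
  (acceptables (P i)).head? = some s ∧ (prio s).idxOf i < q s

instance (P : I → List (Option S)) (prio : S → List I) (q : S → ℕ) (i : I) (s : S) :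
    Decidable (GuaranteedFirstChoice P prio q i s) :=
  inferInstanceAs (Decidable (_ ∧ _))

/-- School `s` is competitive: at least `q s` students are guaranteed their first
choice `s`. -/
def Competitive (P : I → List (Option S)) (prio : S → List I) (q : S → ℕ) (s : S) : Prop :=
  q s ≤ (Finset.univ.filter (fun i => GuaranteedFirstChoice P prio q i s)).card

instance (P : I → List (Option S)) (prio : S → List I) (q : S → ℕ) (s : S) :
    Decidable (Competitive P prio q s) :=
  inferInstanceAs (Decidable (_ ≤ _))

/-- `P'` is a Nash equilibrium of the game `(GS^ℓ, P)` with semi-sophisticated students: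
every student guaranteed her first choice reports truthfully; every other student reports
truthfully if she has at most `ℓ` acceptable schools or all her acceptable schools are
competitive, and otherwise lists as acceptable, in the order given by her true preference,
only her acceptable schools that are not competitive. -/
def SemiSophProfile (ℓ : ℕ) (P : I → List (Option S)) (prio : S → List I) (q : S → ℕ)
    (P' : I → List (Option S)) : Prop :=
  ∀ i : I,
    ((∃ s : S, GuaranteedFirstChoice P prio q i s) → P' i = P i) ∧
    (¬ (∃ s : S, GuaranteedFirstChoice P prio q i s) →
      (((acceptables (P i)).length ≤ ℓ ∨ ∀ s ∈ acceptables (P i), Competitive P prio q s) →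
          P' i = P i) ∧
      (¬ ((acceptables (P i)).length ≤ ℓ ∨
            ∀ s ∈ acceptables (P i), Competitive P prio q s) →
          acceptables (P' i) =
            (acceptables (P i)).filter (fun s => decide (¬ Competitive P prio q s))))


/-!
Under a common priority order there is at most one stable matching: by induction along the
order, two stable matchings give the students above `i` the same seats, and stability then
forces the same assignment for `i`. Deferred acceptance is stable for arbitrary priorities, so
`SD^k` outputs this matching for the truncated profile `P^k`. The outcome of `FPF^k` only uses
schools within the truncated lists, so if it is stable at `P` it is stable at `P^k`, and the two
outcomes coincide.

For the example, a first-preference-first school `s₁` has the only seat; `i₁` ranks `s₂ ≻ s₁`,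
`i₂` ranks only `s₁`, and `i₁` has the higher priority. Since `k ≥ 2`, truncation changes
nothing. In every stable matching the seat goes to whichever of `i₁, i₂` has the higher
priority at `s₁`: under `SD^k` this is `i₁`, and the outcome is stable; under `FPF^k` it is
`i₂`, who ranks `s₁` first, and then `i₁` blocks with `s₁`.
-/

-- Until a fixed point is reached, every step increases the sum of the coordinates.
theorem _root_.Function.isFixedPt_iterate_of_le_of_bounded {ι : Type*} [Fintype ι]
    {f : (ι → ℕ) → ι → ℕ} (hf : ∀ σ, σ ≤ f σ) {σ₀ : ι → ℕ} {B : ℕ}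
    (hB : ∀ n i, f^[n] σ₀ i ≤ B) : Function.IsFixedPt f (f^[Fintype.card ι * B + 1] σ₀) := by
  set N := Fintype.card ι * B + 1
  by_contra hN
  have hmove : ∀ m < N, f^[m] σ₀ < f (f^[m] σ₀) := by
    intro m hm
    refine lt_of_le_of_ne (hf _) fun hfix => hN ?_
    have : f^[N] σ₀ = f^[m] σ₀ := by
      rw [show N = (N - m) + m by omega, Function.iterate_add_apply,
        Function.iterate_fixed hfix.symm]
    rw [this]
    exact hfix.symm
  have hsum : ∀ m ≤ N, m ≤ ∑ i, f^[m] σ₀ i := by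
    intro m
    induction m with
    | zero => simp
    | succ m ih =>
      intro hm
      obtain ⟨hle, i, hi⟩ := Pi.lt_def.mp (hmove m (by omega))
      have := Finset.sum_lt_sum (fun i _ => hle i) ⟨i, Finset.mem_univ _, hi⟩
      rw [Function.iterate_succ_apply']
      omega
  have hbound : ∑ i, f^[N] σ₀ i ≤ Fintype.card ι * B := by
    simpa using Finset.sum_le_sum fun i (_ : i ∈ Finset.univ) => hB N i
  have := hsum N le_rfl
  omega

section Preferences

variable {S : Type*}

@[simp]
theorem acceptables_cons_some (a : S) (p : List (Option S)) :
    acceptables (some a :: p) = a :: acceptables p := rfl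

@[simp]
theorem acceptables_map_some_append (l : List S) (t : List (Option S)) :
    acceptables (l.map some ++ none :: t) = l := by
  induction l with
  | nil => rfl
  | cons a l ih => simpa using ih

theorem exists_eq_map_some_acceptables_append {p : List (Option S)} (h : none ∈ p) :
    ∃ t, p = (acceptables p).map some ++ none :: t := by
  induction p with
  | nil => simp at h
  | cons x p ih =>
    cases x with
    | none => exact ⟨p, rfl⟩
    | some a =>
      obtain ⟨t, ht⟩ := ih (by simpa using h)
      exact ⟨t, by simp [← ht]⟩

theorem ValidPref.nodup_acceptables {p : List (Option S)} (hp : ValidPref p) :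
    (acceptables p).Nodup := by
  obtain ⟨t, ht⟩ := exists_eq_map_some_acceptables_append (hp.2 none)
  have := hp.1
  rw [ht] at this
  exact (List.nodup_append.mp this).1.of_map some

variable [DecidableEq S] {p : List (Option S)}

theorem idxOf_map_some (l : List S) (a : S) : (l.map some).idxOf (some a) = l.idxOf a := by
  induction l with
  | nil => rfl
  | cons b l ih => by_cases h : b = a <;> simp [h, ih]

theorem ValidPref.idxOf_some_of_mem (hp : ValidPref p) {a : S} (ha : a ∈ acceptables p) :
    p.idxOf (some a) = (acceptables p).idxOf a := by
  obtain ⟨t, ht⟩ := exists_eq_map_some_acceptables_append (hp.2 none)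
  conv_lhs => rw [ht]
  rw [List.idxOf_append_of_mem (by simpa using ha), idxOf_map_some]

theorem ValidPref.idxOf_none (hp : ValidPref p) : p.idxOf none = (acceptables p).length := by
  obtain ⟨t, ht⟩ := exists_eq_map_some_acceptables_append (hp.2 none)
  conv_lhs => rw [ht]
  simp [List.idxOf_append_of_notMem]

theorem ValidPref.length_lt_idxOf_some (hp : ValidPref p) {a : S} (ha : a ∉ acceptables p) :
    (acceptables p).length < p.idxOf (some a) := by
  obtain ⟨t, ht⟩ := exists_eq_map_some_acceptables_append (hp.2 none)
  conv_rhs => rw [ht]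
  rw [List.idxOf_append_of_notMem (by simpa using ha)]
  simp

theorem ValidPref.prefLt_some_none_iff (hp : ValidPref p) {a : S} :
    prefLt p (some a) none ↔ a ∈ acceptables p := by
  unfold prefLt
  rw [hp.idxOf_none]
  by_cases ha : a ∈ acceptables p
  · simp [ha, hp.idxOf_some_of_mem ha, List.idxOf_lt_length_iff]
  · simpa [ha] using (hp.length_lt_idxOf_some ha).le

theorem ValidPref.prefLt_some_some_iff (hp : ValidPref p) {a b : S} (hb : b ∈ acceptables p) :
    prefLt p (some a) (some b) ↔
      a ∈ acceptables p ∧ (acceptables p).idxOf a < (acceptables p).idxOf b := by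
  unfold prefLt
  rw [hp.idxOf_some_of_mem hb]
  by_cases ha : a ∈ acceptables p
  · simp [ha, hp.idxOf_some_of_mem ha]
  · have := List.idxOf_lt_length_iff.mpr hb
    simpa [ha] using (this.trans (hp.length_lt_idxOf_some ha)).le

theorem ValidPref.not_prefLt_none_some (hp : ValidPref p) {a : S} (ha : a ∈ acceptables p) :
    ¬ prefLt p none (some a) := by
  unfold prefLt
  rw [hp.idxOf_none, hp.idxOf_some_of_mem ha, not_lt]
  exact (List.idxOf_lt_length_iff.mpr ha).le

theorem ValidPref.prefLt_some_getElem?_iff (hp : ValidPref p) {a : S} {n : ℕ} :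
    prefLt p (some a) (acceptables p)[n]? ↔
      a ∈ acceptables p ∧ (acceptables p).idxOf a < n := by
  by_cases hn : n < (acceptables p).length
  · rw [List.getElem?_eq_getElem hn, hp.prefLt_some_some_iff (List.getElem_mem hn),
      hp.nodup_acceptables.idxOf_getElem]
  · rw [List.getElem?_eq_none (not_lt.mp hn), hp.prefLt_some_none_iff]
    exact ⟨fun ha => ⟨ha, (List.idxOf_lt_length_iff.mpr ha).trans_le (not_lt.mp hn)⟩,
      And.left⟩

theorem ValidPref.idxOf_lt [Fintype S] (hp : ValidPref p) (x : Option S) :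
    p.idxOf x < Fintype.card S + 1 := by
  have hlen : p.length = Fintype.card S + 1 := by
    rw [← Fintype.card_option, ← List.toFinset_card_of_nodup hp.1,
      Finset.eq_univ_of_forall fun x => List.mem_toFinset.mpr (hp.2 x), Finset.card_univ]
  exact hlen ▸ List.idxOf_lt_length_iff.mpr (hp.2 x)

end Preferences

section Truncation

variable {S : Type*} [DecidableEq S] {p : List (Option S)} {k : ℕ}

@[simp]
theorem acceptables_truncate (p : List (Option S)) (k : ℕ) :
    acceptables (truncate p k) = (acceptables p).take k :=
  acceptables_map_some_append _ _

theorem validPref_truncate (hp : ValidPref p) (k : ℕ) : ValidPref (truncate p k) := by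
  set A := ((acceptables p).take k).map some
  refine ⟨?_, fun x => ?_⟩
  · rw [truncate, List.nodup_append, List.nodup_cons]
    refine ⟨(hp.nodup_acceptables.sublist (List.take_sublist _ _)).map
      (Option.some_injective S), ⟨by simp, hp.1.filter _⟩, ?_⟩
    rintro x hx y hy rfl
    obtain ⟨a, -, rfl⟩ := List.mem_map.mp hx
    simp_all
  · rw [truncate, List.mem_append, List.mem_cons, List.mem_filter]
    by_cases h : x ∈ A
    · exact Or.inl h
    · by_cases hx : x = none
      · exact Or.inr (Or.inl hx)
      · exact Or.inr (Or.inr ⟨hp.2 x, decide_eq_true ⟨hx, h⟩⟩)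

theorem ValidPref.truncate_eq_self (hp : ValidPref p) (hk : (acceptables p).length ≤ k) :
    truncate p k = p := by
  obtain ⟨t, ht⟩ := exists_eq_map_some_acceptables_append (hp.2 none)
  set A := acceptables p
  have hnd := hp.1
  rw [ht, List.nodup_append, List.nodup_cons] at hnd
  rw [truncate, List.take_of_length_le hk]
  conv_rhs => rw [ht]
  congr 2
  rw [ht, List.filter_append, List.filter_cons, List.filter_eq_nil_iff.mpr (by simp),
    List.filter_eq_self.mpr]
  · simp
  · intro x hx
    have hxA : x ∉ A.map some := fun h => hnd.2.2 x h x (by simp [hx]) rfl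
    have hxn : x ≠ none := by rintro rfl; exact hnd.2.1.1 hx
    exact decide_eq_true ⟨hxn, hxA⟩

theorem ValidPref.prefLt_of_prefLt_truncate (hp : ValidPref p) {s : S} {y : Option S}
    (hy : ∀ t, y = some t → t ∈ (acceptables p).take k)
    (h : prefLt (truncate p k) (some s) y) : prefLt p (some s) y := by
  have hpk := validPref_truncate hp k
  cases y with
  | none =>
    rw [hpk.prefLt_some_none_iff, acceptables_truncate] at h
    exact hp.prefLt_some_none_iff.mpr (List.mem_of_mem_take h)
  | some t =>
    have ht := hy t rfl
    rw [hpk.prefLt_some_some_iff (by simpa using ht), acceptables_truncate] at h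
    obtain ⟨hs, hlt⟩ := h
    rw [hp.prefLt_some_some_iff (List.mem_of_mem_take ht)]
    have hpre := List.take_prefix k (acceptables p)
    exact ⟨List.mem_of_mem_take hs, by
      rwa [← hpre.idxOf_eq_of_mem hs, ← hpre.idxOf_eq_of_mem ht]⟩

end Truncation

section Stability

variable {I S : Type*} [DecidableEq S]

theorem individuallyRational_iff_mem_acceptables {P : I → List (Option S)} {μ : I → Option S}
    (hP : ∀ i, ValidPref (P i)) :
    IndividuallyRational P μ ↔ ∀ i s, μ i = some s → s ∈ acceptables (P i) := by
  refine ⟨fun h i s hμ => ?_, fun h i => ?_⟩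
  · by_contra hs
    apply h i
    rw [hμ, prefLt, (hP i).idxOf_none]
    exact (hP i).length_lt_idxOf_some hs
  · cases hμ : μ i with
    | none => exact lt_irrefl _
    | some s => exact (hP i).not_prefLt_none_some (h i s hμ)

theorem isStable_truncate_of_isStable [Fintype I] [DecidableEq I] {P : I → List (Option S)}
    {prio : S → List I} {q : S → ℕ} {μ : I → Option S} {k : ℕ} (hP : ∀ i, ValidPref (P i))
    (hμ : ∀ i s, μ i = some s → s ∈ (acceptables (P i)).take k)
    (h : IsStable P prio q μ) : IsStable (fun i => truncate (P i) k) prio q μ :=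
  ⟨(individuallyRational_iff_mem_acceptables fun i => validPref_truncate (hP i) k).mpr
      (by simpa using hμ),
    fun i ⟨s, hpref, hcap⟩ => h.2 i ⟨s, (hP i).prefLt_of_prefLt_truncate (hμ i) hpref, hcap⟩⟩

theorem prioLt_append_of_mem_of_not_mem [DecidableEq I] {l₁ : List I} (l₂ : List I) {i j : I}
    (hi : i ∈ l₁) (hj : j ∉ l₁) : prioLt (l₁ ++ l₂) i j := by
  unfold prioLt
  rw [List.idxOf_append_of_mem hi, List.idxOf_append_of_notMem hj]
  exact (List.idxOf_lt_length_iff.mpr hi).trans_le (Nat.le_add_right _ _)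

theorem eq_some_of_isStable_of_prioLt [Fintype I] [DecidableEq I] {P : I → List (Option S)}
    {prio : S → List I} {q : S → ℕ} {μ : I → Option S} {s₁ : S} {a b : I}
    (hP : ∀ i, ValidPref (P i)) (hq : ∀ s ≠ s₁, q s = 0) (hq₁ : 0 < q s₁)
    (hb : s₁ ∈ acceptables (P b))
    (hab : ∀ j, s₁ ∈ acceptables (P j) → j = a ∨ j = b)
    (hμ : IsStable P prio q μ) (hμm : IsMatching q μ) (hba : prioLt (prio s₁) b a) :
    μ b = some s₁ := by
  by_contra hne
  have hpref : prefLt (P b) (some s₁) (μ b) := by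
    cases h : μ b with
    | none => exact (hP b).prefLt_some_none_iff.mpr hb
    | some s =>
      have hs : s ≠ s₁ := fun hs => hne (hs ▸ h)
      have : 0 < (Finset.univ.filter fun j => μ j = some s).card :=
        Finset.card_pos.mpr ⟨b, by simp [h]⟩
      exact absurd ((hμm s).trans_eq (hq s hs)) this.not_ge
  refine hμ.2 b ⟨s₁, hpref, ?_⟩
  rcases Nat.lt_or_ge (Finset.univ.filter fun j => μ j = some s₁).card (q s₁) with hfree | hfull
  · exact Or.inl hfree
  obtain ⟨j, hj⟩ := Finset.card_pos.mp (hq₁.trans_le hfull)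
  have hj : μ j = some s₁ := (Finset.mem_filter.mp hj).2
  rcases hab j ((individuallyRational_iff_mem_acceptables hP).mp hμ.1 j s₁ hj) with rfl | rfl
  · exact Or.inr ⟨j, hj, hba⟩
  · exact absurd hj hne

end Stability

section DeferredAcceptance

variable {I S : Type*} [DecidableEq S] (Q : I → List (Option S)) (prio : S → List I) (q : S → ℕ)

def applicants (σ : I → ℕ) (s : S) (l : List I) : List I :=
  l.filter fun j => daTarget Q σ j = some s

variable {Q prio q} {σ : I → ℕ} {i : I} {s : S}

theorem daTarget_of_mem_daHeld (h : i ∈ daHeld Q prio q σ s) : daTarget Q σ i = some s := by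
  simpa [applicants] using (List.mem_filter.mp (List.mem_of_mem_take h)).2

variable (Q q) in
def SaturatedBy (σ : I → ℕ) (s : S) (l : List I) : Prop :=
  q s ≤ (applicants Q σ s l).length

variable {l bef aft : List I}

theorem daHeld_eq_of_saturatedBy (hl : l <+: prio s) (h : SaturatedBy Q q σ s l) :
    daHeld Q prio q σ s = (applicants Q σ s l).take (q s) := by
  obtain ⟨t, ht⟩ := hl
  rw [daHeld, ← ht, List.filter_append]
  exact List.take_append_of_le_length h

theorem length_daHeld_of_saturatedBy (hl : l <+: prio s) (h : SaturatedBy Q q σ s l) :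
    (daHeld Q prio q σ s).length = q s := by
  rw [daHeld_eq_of_saturatedBy hl h, List.length_take, min_eq_left h]

theorem mem_of_mem_daHeld_of_saturatedBy (hl : l <+: prio s) (h : SaturatedBy Q q σ s l)
    {j : I} (hj : j ∈ daHeld Q prio q σ s) : j ∈ l :=
  List.mem_of_mem_filter (List.mem_of_mem_take (daHeld_eq_of_saturatedBy hl h ▸ hj))

theorem nodup_daHeld (hnd : (prio s).Nodup) : (daHeld Q prio q σ s).Nodup :=
  hnd.sublist ((List.take_sublist _ _).trans List.filter_sublist)

theorem saturatedBy_of_not_mem_daHeld (hL : prio s = bef ++ i :: aft)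
    (ht : daTarget Q σ i = some s) (hi : i ∉ daHeld Q prio q σ s) : SaturatedBy Q q σ s bef := by
  unfold SaturatedBy applicants
  by_contra! hlt
  apply hi
  rw [daHeld, hL, List.filter_append, List.filter_cons_of_pos (by simpa using ht),
    List.take_append]
  obtain ⟨m, hm⟩ : ∃ m, q s - (bef.filter fun j => daTarget Q σ j = some s).length = m + 1 :=
    ⟨_, (Nat.succ_pred_eq_of_pos (Nat.sub_pos_of_lt hlt)).symm⟩
  simp [hm]

variable [DecidableEq I]

variable (Q prio q) in
def daState (n : ℕ) : I → ℕ := (daStep Q prio q)^[n] fun _ => 0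

theorem daStep_of_mem_daHeld (h : i ∈ daHeld Q prio q σ s) : daStep Q prio q σ i = σ i := by
  simp [daStep, daTarget_of_mem_daHeld h, h]

theorem daTarget_daStep_of_mem_daHeld (h : i ∈ daHeld Q prio q σ s) :
    daTarget Q (daStep Q prio q σ) i = some s := by
  rw [daTarget, daStep_of_mem_daHeld h]
  exact daTarget_of_mem_daHeld h

variable (Q prio q) in
theorem daStep_eq_or_rejected (σ : I → ℕ) (i : I) :
    daStep Q prio q σ i = σ i ∨ ∃ s, daTarget Q σ i = some s ∧
      i ∉ daHeld Q prio q σ s ∧ daStep Q prio q σ i = σ i + 1 := by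
  unfold daStep
  cases ht : daTarget Q σ i with
  | none => exact Or.inl rfl
  | some s => by_cases hs : i ∈ daHeld Q prio q σ s <;> simp [hs]

theorem le_daStep (σ : I → ℕ) : σ ≤ daStep Q prio q σ := by
  intro i
  show σ i ≤ daStep Q prio q σ i
  rcases daStep_eq_or_rejected Q prio q σ i with h | ⟨-, -, -, h⟩ <;> omega

theorem daState_succ (n : ℕ) :
    daState Q prio q (n + 1) = daStep Q prio q (daState Q prio q n) :=
  Function.iterate_succ_apply' _ _ _

theorem daState_le_length (n : ℕ) (i : I) :
    daState Q prio q n i ≤ (acceptables (Q i)).length := by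
  induction n with
  | zero => simp [daState]
  | succ n ih =>
    rw [daState_succ]
    rcases daStep_eq_or_rejected Q prio q (daState Q prio q n) i with h | ⟨s, hs, -, h⟩
    · exact h ▸ ih
    · rw [h]
      exact (List.getElem?_eq_some_iff.mp hs).1

theorem mem_daHeld_of_isFixedPt (hσ : Function.IsFixedPt (daStep Q prio q) σ)
    (h : daTarget Q σ i = some s) : i ∈ daHeld Q prio q σ s := by
  by_contra hi
  have := congrFun hσ i
  simp [daStep, h, hi] at this

theorem saturatedBy_daStep (hnd : (prio s).Nodup) (hl : l <+: prio s)
    (h : SaturatedBy Q q σ s l) : SaturatedBy Q q (daStep Q prio q σ) s l := by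
  have hsub : daHeld Q prio q σ s ⊆ applicants Q (daStep Q prio q σ) s l := fun j hj => by
    simpa [applicants, mem_of_mem_daHeld_of_saturatedBy hl h hj] using
      daTarget_daStep_of_mem_daHeld hj
  calc q s = (daHeld Q prio q σ s).length := (length_daHeld_of_saturatedBy hl h).symm
    _ ≤ _ := ((nodup_daHeld hnd).subperm hsub).length_le

theorem saturatedBy_daState (hnd : (prio s).Nodup) (hL : prio s = bef ++ i :: aft)
    (hs : s ∈ acceptables (Q i)) {n : ℕ}
    (hrej : (acceptables (Q i)).idxOf s < daState Q prio q n i) :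
    SaturatedBy Q q (daState Q prio q n) s bef := by
  induction n with
  | zero => simp [daState] at hrej
  | succ n ih =>
    rw [daState_succ] at hrej ⊢
    refine saturatedBy_daStep hnd ⟨i :: aft, hL.symm⟩ ?_
    rcases daStep_eq_or_rejected Q prio q (daState Q prio q n) i with h | ⟨s', hs', hi, h⟩
    · exact ih (h ▸ hrej)
    · rcases Nat.lt_succ_iff_lt_or_eq.mp (h ▸ hrej) with hlt | heq
      · exact ih hlt
      · have hs's : s' = s := by
          rw [daTarget, ← heq, List.getElem?_idxOf hs, Option.some_inj] at hs'
          exact hs'.symm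
        subst hs's
        exact saturatedBy_of_not_mem_daHeld hL hs' hi

variable [Fintype I] [Fintype S]

theorem isFixedPt_daState (hQ : ∀ i, ValidPref (Q i)) :
    Function.IsFixedPt (daStep Q prio q) (daState Q prio q (Fintype.card I * Fintype.card S + 1)) :=
  Function.isFixedPt_iterate_of_le_of_bounded le_daStep fun n i =>
    (daState_le_length n i).trans (hQ i).nodup_acceptables.length_le_card

theorem GS_eq_daTarget (hQ : ∀ i, ValidPref (Q i)) :
    GS Q prio q = daTarget Q (daState Q prio q (Fintype.card I * Fintype.card S + 1)) := by
  funext i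
  set σ := daState Q prio q (Fintype.card I * Fintype.card S + 1)
  change (match daTarget Q σ i with
    | none => none
    | some s => if i ∈ daHeld Q prio q σ s then some s else none) = _
  cases h : daTarget Q σ i with
  | none => rfl
  | some s => exact if_pos (mem_daHeld_of_isFixedPt (isFixedPt_daState hQ) h)

theorem GS_eq_some_iff (hQ : ∀ i, ValidPref (Q i)) :
    GS Q prio q i = some s ↔
      i ∈ daHeld Q prio q (daState Q prio q (Fintype.card I * Fintype.card S + 1)) s := by
  rw [GS_eq_daTarget hQ]
  exact ⟨mem_daHeld_of_isFixedPt (isFixedPt_daState hQ), daTarget_of_mem_daHeld⟩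

theorem GS_mem_acceptables (hQ : ∀ i, ValidPref (Q i)) (h : GS Q prio q i = some s) :
    s ∈ acceptables (Q i) := by
  rw [GS_eq_daTarget hQ] at h
  exact List.mem_of_getElem? h

theorem filter_GS_eq_some (hQ : ∀ i, ValidPref (Q i)) (s : S) :
    (Finset.univ.filter fun i => GS Q prio q i = some s) =
      (daHeld Q prio q (daState Q prio q (Fintype.card I * Fintype.card S + 1)) s).toFinset := by
  ext i
  simp [GS_eq_some_iff hQ]

theorem GS_isMatching (hQ : ∀ i, ValidPref (Q i)) : IsMatching q (GS Q prio q) := by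
  intro s
  rw [filter_GS_eq_some hQ]
  exact (List.toFinset_card_le _).trans (List.length_take_le _ _)

theorem GS_isStable (hQ : ∀ i, ValidPref (Q i)) (hprio : ∀ s, ValidPrio (prio s)) :
    IsStable Q prio q (GS Q prio q) := by
  refine ⟨(individuallyRational_iff_mem_acceptables hQ).mpr fun i s => GS_mem_acceptables hQ, ?_⟩
  rintro i ⟨s, hpref, hblock⟩
  set σ := daState Q prio q (Fintype.card I * Fintype.card S + 1)
  rw [GS_eq_daTarget hQ, daTarget, (hQ i).prefLt_some_getElem?_iff] at hpref
  obtain ⟨bef, aft, hL⟩ := List.append_of_mem ((hprio s).2 i)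
  have hnd := (hprio s).1
  have hi : i ∉ bef := by
    rw [hL, List.nodup_append] at hnd
    exact fun h => hnd.2.2 i h i List.mem_cons_self rfl
  -- Once `s` rejected `i`, its seats stay filled by students of higher priority than `i`.
  have hsat : SaturatedBy Q q σ s bef := saturatedBy_daState (prio := prio) hnd hL hpref.1 hpref.2
  have hbef : bef <+: prio s := ⟨i :: aft, hL.symm⟩
  rcases hblock with hfree | ⟨j, hj, hij⟩
  · rw [filter_GS_eq_some hQ, List.toFinset_card_of_nodup (nodup_daHeld hnd),
      length_daHeld_of_saturatedBy hbef hsat] at hfree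
    exact lt_irrefl _ hfree
  · have hj := mem_of_mem_daHeld_of_saturatedBy hbef hsat ((GS_eq_some_iff hQ).mp hj)
    rw [hL] at hij
    exact lt_asymm hij (prioLt_append_of_mem_of_not_mem _ hj hi)

end DeferredAcceptance

section CommonPriority

variable {I S : Type*} [Fintype I] [DecidableEq I] [DecidableEq S]
  {Q : I → List (Option S)} {L : List I} {q : S → ℕ} {μ ν : I → Option S} {i : I}

def seatsAbove (L : List I) (μ : I → Option S) (s : S) (i : I) : Finset I :=
  Finset.univ.filter fun j => μ j = some s ∧ prioLt L j i

theorem card_seatsAbove_lt (hμ : IsMatching q μ) {s : S} (h : μ i = some s) :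
    (seatsAbove L μ s i).card < q s := by
  refine (Finset.card_lt_card ⟨fun j hj => ?_, fun hsub => ?_⟩).trans_le (hμ s)
  · simp_all [seatsAbove]
  · have := hsub (Finset.mem_filter.mpr ⟨Finset.mem_univ i, h⟩)
    exact lt_irrefl _ (Finset.mem_filter.mp this).2.2

theorem le_card_seatsAbove (hi : i ∈ L) (hμ : IsStable Q (fun _ => L) q μ) {s : S}
    (h : prefLt (Q i) (some s) (μ i)) : q s ≤ (seatsAbove L μ s i).card := by
  have hnb : ¬ Blocks Q (fun _ => L) q μ i s := fun hb => hμ.2 i ⟨s, hb⟩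
  simp only [Blocks, h, true_and, not_or, not_lt, not_exists, not_and] at hnb
  refine hnb.1.trans (Finset.card_le_card fun j hj => ?_)
  simp only [seatsAbove, Finset.mem_filter, Finset.mem_univ, true_and] at hj ⊢
  refine ⟨hj, lt_of_le_of_ne (not_lt.mp (hnb.2 j hj)) fun heq => ?_⟩
  rw [(List.idxOf_inj hi).mp heq.symm, hj] at h
  exact lt_irrefl _ h

theorem not_prefLt_of_seatsAbove_eq (hi : i ∈ L) (hμ : IsStable Q (fun _ => L) q μ)
    (hν : IsMatching q ν) (h : ∀ s, seatsAbove L μ s i = seatsAbove L ν s i) :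
    ¬ prefLt (Q i) (ν i) (μ i) := by
  intro hlt
  cases hνi : ν i with
  | none => exact hμ.1 i (hνi ▸ hlt)
  | some s =>
    rw [hνi] at hlt
    have := le_card_seatsAbove hi hμ hlt
    have := card_seatsAbove_lt (L := L) hν hνi
    rw [h s] at *
    omega

theorem eq_of_isStable_common (hQ : ∀ i, ValidPref (Q i)) (hL : ∀ i, i ∈ L)
    (hμm : IsMatching q μ) (hνm : IsMatching q ν)
    (hμ : IsStable Q (fun _ => L) q μ) (hν : IsStable Q (fun _ => L) q ν) : μ = ν := by
  funext i
  induction hn : L.idxOf i using Nat.strong_induction_on generalizing i with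
  | _ n ih =>
  have hseats : ∀ s, seatsAbove L μ s i = seatsAbove L ν s i := fun s =>
    Finset.filter_congr fun j _ => and_congr_left fun hj => by rw [ih _ (hn ▸ hj) j rfl]
  have h₁ := not_prefLt_of_seatsAbove_eq (hL i) hμ hνm hseats
  have h₂ := not_prefLt_of_seatsAbove_eq (hL i) hν hμm fun s => (hseats s).symm
  unfold prefLt at h₁ h₂
  exact (List.idxOf_inj ((hQ i).2 _)).mp (by omega)

end CommonPriority

section FirstPreferenceFirst

variable {I S : Type*} [Fintype S] [DecidableEq S]
  {fpf : Finset S} {P : I → List (Option S)} {prio : S → List I} {s : S}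

theorem validPrio_fpfPrio (hP : ∀ i, ValidPref (P i)) (hprio : ValidPrio (prio s)) :
    ValidPrio (fpfPrio fpf P prio s) := by
  unfold fpfPrio
  split_ifs
  · refine ⟨List.nodup_flatMap.mpr ⟨fun r _ => hprio.1.filter _, ?_⟩, fun i => ?_⟩
    · refine List.nodup_range.pairwise_of_forall_ne fun r _ r' _ hne => ?_
      simp only [Function.onFun, List.disjoint_left, List.mem_filter, decide_eq_true_eq]
      exact fun i hi hi' => hne (hi.2.symm.trans hi'.2)
    · exact List.mem_flatMap.mpr ⟨_, List.mem_range.mpr ((hP i).idxOf_lt (some s)),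
        List.mem_filter.mpr ⟨hprio.2 i, decide_eq_true rfl⟩⟩
  · exact hprio

theorem prioLt_fpfPrio [DecidableEq I] (hs : s ∈ fpf) (hP : ∀ i, ValidPref (P i))
    (hprio : ∀ i, i ∈ prio s)
    {i j : I} (h : (P i).idxOf (some s) < (P j).idxOf (some s)) :
    prioLt (fpfPrio fpf P prio s) i j := by
  set r := (P j).idxOf (some s)
  have hr : Fintype.card S + 1 = r + (Fintype.card S + 1 - r) :=
    (Nat.add_sub_of_le ((hP j).idxOf_lt (some s)).le).symm
  rw [fpfPrio, if_pos hs, hr, List.range_add, List.flatMap_append]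
  refine prioLt_append_of_mem_of_not_mem _ ?_ ?_
  · exact List.mem_flatMap.mpr ⟨_, List.mem_range.mpr h,
      List.mem_filter.mpr ⟨hprio i, decide_eq_true rfl⟩⟩
  · intro hj
    obtain ⟨r', hr', hj⟩ := List.mem_flatMap.mp hj
    rw [List.mem_filter, decide_eq_true_eq] at hj
    exact absurd (List.mem_range.mp hr') (hj.2 ▸ lt_irrefl r)

end FirstPreferenceFirst

section Example

variable {α : Type*} [Fintype α] [DecidableEq α]

noncomputable def completeOrder (l : List α) : List α :=
  l ++ Finset.univ.toList.filter (· ∉ l)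

theorem nodup_completeOrder {l : List α} (h : l.Nodup) : (completeOrder l).Nodup := by
  refine List.nodup_append.mpr ⟨h, (Finset.nodup_toList _).filter _, ?_⟩
  rintro a ha b hb rfl
  simp_all

theorem mem_completeOrder (l : List α) (a : α) : a ∈ completeOrder l := by
  by_cases h : a ∈ l <;> simp [completeOrder, h]

variable {S : Type*} [Fintype S] [DecidableEq S]

noncomputable def prefOfList (A : List S) : List (Option S) := completeOrder (A.map some ++ [none])

@[simp]
theorem acceptables_prefOfList (A : List S) : acceptables (prefOfList A) = A := by
  rw [prefOfList, completeOrder, List.append_assoc]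
  exact acceptables_map_some_append _ _

theorem validPref_prefOfList {A : List S} (h : A.Nodup) : ValidPref (prefOfList A) :=
  ⟨nodup_completeOrder (List.nodup_append.mpr
    ⟨h.map (Option.some_injective S), List.nodup_singleton none, by simp⟩), mem_completeOrder _⟩

end Example

section Fairness

variable {I S : Type*} [Fintype I] [DecidableEq I] [Fintype S] [DecidableEq S]

theorem GSk_isStable_of_FPFk_isStable (fpf : Finset S) (k : ℕ) {P : I → List (Option S)}
    {L : List I} {q : S → ℕ} (hP : ∀ i, ValidPref (P i)) (hL : ValidPrio L)
    (h : IsStable P (fun _ => L) q (FPFk fpf k P (fun _ => L) q)) :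
    IsStable P (fun _ => L) q (GSk k P (fun _ => L) q) := by
  set Q := fun i => truncate (P i) k
  have hQ : ∀ i, ValidPref (Q i) := fun i => validPref_truncate (hP i) k
  have hFPF : IsStable Q (fun _ => L) q (FPFk fpf k P (fun _ => L) q) :=
    isStable_truncate_of_isStable hP
      (fun i s hs => by simpa [Q] using GS_mem_acceptables hQ hs) h
  have : GSk k P (fun _ => L) q = FPFk fpf k P (fun _ => L) q :=
    eq_of_isStable_common hQ hL.2 (GS_isMatching hQ) (GS_isMatching hQ)
      (GS_isStable hQ fun _ => hL) hFPF
  rwa [this]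

theorem exists_GSk_isStable_not_FPFk_isStable {fpf : Finset S} {s₁ s₂ : S} (hs₁ : s₁ ∈ fpf)
    (hs : s₁ ≠ s₂) {i₁ i₂ : I} (hi : i₁ ≠ i₂) {k : ℕ} (hk : 2 ≤ k) :
    ∃ (P : I → List (Option S)) (prio : S → List I) (q : S → ℕ),
      (∀ i, ValidPref (P i)) ∧ (∀ s, ValidPrio (prio s)) ∧ (∀ s s' : S, prio s = prio s') ∧
      IsStable P prio q (GSk k P prio q) ∧ ¬ IsStable P prio q (FPFk fpf k P prio q) := by
  set A : I → List S := fun i => if i = i₁ then [s₂, s₁] else if i = i₂ then [s₁] else []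
  set P : I → List (Option S) := fun i => prefOfList (A i)
  set L := completeOrder [i₁, i₂]
  set q : S → ℕ := fun s => if s = s₁ then 1 else 0
  have hA₁ : acceptables (P i₁) = [s₂, s₁] := by simp [P, A]
  have hA₂ : acceptables (P i₂) = [s₁] := by simp [P, A, hi.symm]
  have hA : ∀ i, (A i).Nodup ∧ (A i).length ≤ 2 := fun i => by
    simp only [A]; split_ifs <;> simp [hs.symm]
  have hP : ∀ i, ValidPref (P i) := fun i => validPref_prefOfList (hA i).1
  have hL : ValidPrio L := ⟨nodup_completeOrder (by simp [hi]), mem_completeOrder _⟩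
  have htrunc : (fun i => truncate (P i) k) = P :=
    funext fun i => (hP i).truncate_eq_self (by simpa [P] using (hA i).2.trans hk)
  have hq : ∀ s ≠ s₁, q s = 0 := fun _ h => if_neg h
  have hq₁ : q s₁ = 1 := if_pos rfl
  have hs₁A : ∀ j, s₁ ∈ acceptables (P j) → j = i₁ ∨ j = i₂ := fun j => by
    simp only [P, A, acceptables_prefOfList]; split_ifs <;> simp_all
  refine ⟨P, fun _ => L, q, hP, fun _ => hL, fun _ _ => rfl, ?_, ?_⟩
  · rw [GSk, htrunc]
    exact GS_isStable hP fun _ => hL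
  rw [FPFk, htrunc, FPF]
  intro hstable
  have hν := GS_isMatching (prio := fpfPrio fpf P fun _ => L) hP (q := q)
  have hL₁₂ : prioLt L i₁ i₂ :=
    prioLt_append_of_mem_of_not_mem (l₁ := [i₁]) (i₂ :: _) (by simp) (by simp [hi.symm])
  have hfpf₂₁ : prioLt (fpfPrio fpf P (fun _ => L) s₁) i₂ i₁ := by
    refine prioLt_fpfPrio hs₁ hP (fun _ => mem_completeOrder _ _) ?_
    rw [(hP i₂).idxOf_some_of_mem (by simp [hA₂]), (hP i₁).idxOf_some_of_mem (by simp [hA₁]),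
      hA₁, hA₂, List.idxOf_cons_ne _ hs.symm]
    simp
  have h₁ := eq_some_of_isStable_of_prioLt hP hq (by omega) (by simp [hA₁])
    (fun j hj => (hs₁A j hj).symm) hstable hν hL₁₂
  have h₂ := eq_some_of_isStable_of_prioLt hP hq (by omega) (by simp [hA₂]) hs₁A
    (GS_isStable hP fun _ => validPrio_fpfPrio hP hL) hν hfpf₂₁
  exact hi (Finset.card_le_one.mp ((hν s₁).trans_eq hq₁) _ (by simp [h₁]) _ (by simp [h₂]))

end Fairness

/-- Proposition 1: with at least two schools, at least one
first-preference-first school, `k > 1` and a common priority order, the constrained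
serial dictatorship `SD^k` (that is, `GS^k` under common priority) is more fair by
stability than the constrained first-preference-first mechanism `FPF^k`. -/
theorem sdk_more_fair_by_stability_than_fpfk
    {I S : Type*} [Fintype I] [DecidableEq I] [Fintype S] [DecidableEq S]
    (hIS : Fintype.card S < Fintype.card I) (hS : 2 ≤ Fintype.card S)
    (fpf : Finset S) (hfpf : fpf.Nonempty) (k : ℕ) (hk : 1 < k) :
    (∀ (P : I → List (Option S)) (prio : S → List I) (q : S → ℕ),
        (∀ i, ValidPref (P i)) → (∀ s, ValidPrio (prio s)) →
        (∀ s s' : S, prio s = prio s') →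
        IsStable P prio q (FPFk fpf k P prio q) → IsStable P prio q (GSk k P prio q)) ∧
    (∃ (P : I → List (Option S)) (prio : S → List I) (q : S → ℕ),
        (∀ i, ValidPref (P i)) ∧ (∀ s, ValidPrio (prio s)) ∧
        (∀ s s' : S, prio s = prio s') ∧
        IsStable P prio q (GSk k P prio q) ∧
        ¬ IsStable P prio q (FPFk fpf k P prio q)) := by
  refine ⟨fun P prio q hP hprio hcommon h => ?_, ?_⟩
  · obtain ⟨s₀⟩ : Nonempty S := Fintype.card_pos_iff.mp (by omega)
    rw [show prio = fun _ => prio s₀ from funext fun s => hcommon s s₀] at h ⊢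
    exact GSk_isStable_of_FPFk_isStable fpf k hP (hprio s₀) h
  · obtain ⟨s₁, hs₁⟩ := hfpf
    obtain ⟨s₂, hs⟩ := Fintype.exists_ne_of_one_lt_card (by omega) s₁
    obtain ⟨i₁, i₂, hi⟩ := Fintype.exists_pair_of_one_lt_card (by omega : 1 < Fintype.card I)
    exact exists_GSk_isStable_not_FPFk_isStable hs₁ hs.symm hi hk

end SchoolChoice
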